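/- Let φ : G → G' be a half-isomorphism of groups and let X be a nonempty subset of G. Then the image φ(⟨X⟩) of the subgroup generated by X equals the subgroup of G' generated by φ(X). -/

import Mathlib

/-!
A half-homomorphism fixes `1` and inverses, and maps commuting elements to commuting elements.
For an injective one this gives `φ a * φ b ∈ {φ (a * b), φ (b * a)}`: if neither holds, then
`φ (a * b) = φ (b * a) = φ b * φ a`, so `a` and `b` commute and so do their images. Hence the image
of a subgroup is a subgroup, so `φ (⟨X⟩) ⊇ ⟨φ X⟩`; the other inclusion is an induction on `⟨X⟩`.
-/

def IsHalfHom {G G' : Type*} [Mul G] [Mul G'] (φ : G → G') : Prop :=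
  ∀ x y : G, φ (x * y) = φ x * φ y ∨ φ (x * y) = φ y * φ x

namespace IsHalfHom

variable {G G' : Type*} [Group G] [Group G'] {φ : G → G'}

theorem map_one (hφ : IsHalfHom φ) : φ 1 = 1 := by
  rcases hφ 1 1 with h | h <;> simpa using h

theorem map_inv (hφ : IsHalfHom φ) (x : G) : φ x⁻¹ = (φ x)⁻¹ := by
  rcases hφ x x⁻¹ with h | h <;> rw [mul_inv_cancel, hφ.map_one] at h
  · exact eq_inv_of_mul_eq_one_right h.symm
  · exact eq_inv_of_mul_eq_one_left h.symm

theorem map_mul_self (hφ : IsHalfHom φ) (a : G) : φ (a * a) = φ a * φ a := by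
  rcases hφ a a with h | h <;> exact h

/-- The nontrivial case: compare the two ways of evaluating `φ (a * a * b)` and
`φ ((a * a * b) * b) = φ ((a * b) * (a * b))`. -/
theorem commute_map_of_map_mul_eq_swap (hφ : IsHalfHom φ) {a b : G} (hab : Commute a b)
    (h : φ (a * b) = φ b * φ a) : Commute (φ a) (φ b) := by
  unfold Commute SemiconjBy
  set u := φ a
  set v := φ b
  have haab : φ (a * a * b) = v * (u * u) ∨ u * v = v * u := by
    rcases hφ (a * a) b with h₂ | h₂
    · rw [hφ.map_mul_self] at h₂
      rcases hφ a (a * b) with h₃ | h₃ <;> rw [← mul_assoc, h₂, h] at h₃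
      · right
        simpa only [mul_assoc, mul_right_inj] using h₃
      · left
        rw [h₂, h₃, mul_assoc]
    · exact Or.inl (by rw [h₂, hφ.map_mul_self])
  rcases haab with haab | hcomm
  · have habab : φ (a * a * b * b) = v * u * (v * u) := by
      rw [show a * a * b * b = a * b * (a * b) by rw [mul_assoc a b, ← mul_assoc b a b, ← hab.eq]; simp only [mul_assoc],
        hφ.map_mul_self, h]
    rcases hφ (a * a * b) b with h₄ | h₄ <;> rw [habab, haab] at h₄
    · simpa only [mul_assoc, mul_right_inj] using h₄.symm
    · rw [mul_assoc, mul_right_inj, ← mul_assoc, ← mul_assoc, mul_left_inj] at h₄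
      exact h₄
  · exact hcomm

theorem commute_map (hφ : IsHalfHom φ) {a b : G} (hab : Commute a b) : Commute (φ a) (φ b) := by
  rcases hφ a b with h | h
  · exact (hφ.commute_map_of_map_mul_eq_swap hab.symm (hab.eq ▸ h)).symm
  · exact hφ.commute_map_of_map_mul_eq_swap hab h

theorem mul_map_eq_or (hφ : IsHalfHom φ) (hinj : Function.Injective φ) (a b : G) :
    φ a * φ b = φ (a * b) ∨ φ a * φ b = φ (b * a) := by
  rcases hφ a b with h | h
  · exact Or.inl h.symm
  rcases hφ b a with h' | h'
  · have hab : Commute a b := hinj (h.trans h'.symm)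
    exact Or.inl ((hφ.commute_map hab).eq.trans h.symm)
  · exact Or.inr h'.symm

def mapSubgroup (hφ : IsHalfHom φ) (hinj : Function.Injective φ) (H : Subgroup G) :
    Subgroup G' where
  carrier := φ '' H
  one_mem' := ⟨1, H.one_mem, hφ.map_one⟩
  mul_mem' := by
    rintro _ _ ⟨a, ha, rfl⟩ ⟨b, hb, rfl⟩
    rcases hφ.mul_map_eq_or hinj a b with h | h
    · exact ⟨a * b, H.mul_mem ha hb, h.symm⟩
    · exact ⟨b * a, H.mul_mem hb ha, h.symm⟩
  inv_mem' := by
    rintro _ ⟨a, ha, rfl⟩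
    exact ⟨a⁻¹, H.inv_mem ha, hφ.map_inv a⟩

theorem image_closure_subset (hφ : IsHalfHom φ) (X : Set G) :
    φ '' (Subgroup.closure X : Set G) ⊆ Subgroup.closure (φ '' X) := by
  rintro _ ⟨x, hx, rfl⟩
  induction hx using Subgroup.closure_induction with
  | mem y hy => exact Subgroup.subset_closure ⟨y, hy, rfl⟩
  | one => rw [hφ.map_one]; exact Subgroup.one_mem _
  | mul y z _ _ ihy ihz =>
    rcases hφ y z with h | h <;> rw [h]
    · exact Subgroup.mul_mem _ ihy ihz
    · exact Subgroup.mul_mem _ ihz ihy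
  | inv y _ ihy => rw [hφ.map_inv]; exact Subgroup.inv_mem _ ihy

theorem image_closure (hφ : IsHalfHom φ) (hinj : Function.Injective φ) (X : Set G) :
    φ '' (Subgroup.closure X : Set G) = Subgroup.closure (φ '' X) := by
  refine (hφ.image_closure_subset X).antisymm ?_
  show Subgroup.closure (φ '' X) ≤ hφ.mapSubgroup hinj (Subgroup.closure X)
  exact (Subgroup.closure_le _).mpr (Set.image_mono Subgroup.subset_closure)

end IsHalfHom

theorem stmt_4_general {G G' : Type*} [Group G] [Group G'] (φ : G → G')
    (hbij : Function.Bijective φ)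
    (hhalf : ∀ x y : G, φ (x * y) = φ x * φ y ∨ φ (x * y) = φ y * φ x)
    (X : Set G) :
    φ '' (Subgroup.closure X : Set G) = (Subgroup.closure (φ '' X) : Set G') :=
  IsHalfHom.image_closure hhalf hbij.injective X

theorem stmt_4 {G G' : Type*} [Group G] [Group G'] (φ : G → G')
    (hbij : Function.Bijective φ)
    (hhalf : ∀ x y : G, φ (x * y) = φ x * φ y ∨ φ (x * y) = φ y * φ x)
    (X : Set G) (hX : X.Nonempty) :
    φ '' (Subgroup.closure X : Set G) = (Subgroup.closure (φ '' X) : Set G') :=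
  stmt_4_general φ hbij hhalf X
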